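/- Let A be a constant real skew-symmetric 3×3 matrix and B₀ a constant real symmetric 3×3 matrix with trace 0, and set B(t) = e^{tA} B₀ e^{−tA} (which is symmetric traceless for every t, and is the solution of B′ = AB − BA given in the paper by the 5×5 matrix exponential exp(Mt)). Then v(t,x) = Ax, H(t,x) = B(t)x and p(t,x) = (ρ/2)|Ax|² solve the MHD equations on ℝ × ℝ³. (Proposition 2.3.) -/

import Mathlib

open Real Matrix

/-- Partial derivative in the `i`-th spatial coordinate. -/
noncomputable def pd (i : Fin 3) (f : (Fin 3 → ℝ) → ℝ) (x : Fin 3 → ℝ) : ℝ :=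
  deriv (fun s => f (Function.update x i s)) (x i)

/-- Divergence of a vector field on `ℝ³`. -/
noncomputable def vdiv (F : (Fin 3 → ℝ) → (Fin 3 → ℝ)) (x : Fin 3 → ℝ) : ℝ :=
  ∑ i, pd i (fun y => F y i) x

/-- Curl of a vector field on `ℝ³`. -/
noncomputable def vcurl (F : (Fin 3 → ℝ) → (Fin 3 → ℝ)) (x : Fin 3 → ℝ) : Fin 3 → ℝ :=
  ![pd 1 (fun y => F y 2) x - pd 2 (fun y => F y 1) x,
    pd 2 (fun y => F y 0) x - pd 0 (fun y => F y 2) x,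
    pd 0 (fun y => F y 1) x - pd 1 (fun y => F y 0) x]

/-- Laplacian of a scalar field on `ℝ³`. -/
noncomputable def slap (f : (Fin 3 → ℝ) → ℝ) (x : Fin 3 → ℝ) : ℝ :=
  ∑ i, pd i (fun y => pd i f y) x

/-- Cross product on `ℝ³`. -/
def cross3 (u v : Fin 3 → ℝ) : Fin 3 → ℝ :=
  ![u 1 * v 2 - u 2 * v 1, u 2 * v 0 - u 0 * v 2, u 0 * v 1 - u 1 * v 0]

/-- The incompressible viscous MHD equations with finite electrical conductivity:
(M1) `∇·v = 0`, (M2) momentum, (M3) `∇·H = 0`, (M4) induction. -/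
def MHD (ρ ν μ₀ η : ℝ) (v H : ℝ → (Fin 3 → ℝ) → (Fin 3 → ℝ))
    (p : ℝ → (Fin 3 → ℝ) → ℝ) : Prop :=
  ∀ (t : ℝ) (x : Fin 3 → ℝ),
    vdiv (v t) x = 0 ∧
    (∀ i, deriv (fun s => v s x i) t
        + (∑ j, v t x j * pd j (fun y => v t y i) x)
        - μ₀ * cross3 (H t x) (vcurl (H t) x) i
        + (1 / ρ) * pd i (p t) x
        = ν * slap (fun y => v t y i) x) ∧
    vdiv (H t) x = 0 ∧
    (∀ i, deriv (fun s => H s x i) t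
        = vcurl (fun y => cross3 (v t y) (H t y)) x i
          + η * slap (fun y => H t y i) x)

/-! For linear fields `u = M x` every first derivative is constant: `∇·u = tr M`, `Δu = 0`,
`∇×u` only sees the antisymmetric part of `M`, and
`∇×(M x × N x) = (tr N) M x - (tr M) N x + (M N - N M) x`.
Conjugation by `e^{tA}` keeps `B(t)` symmetric (as `A` is skew) and traceless. Hence `∇×H = 0`,
so the Lorentz force vanishes and the convective term `A² x` is balanced by the pressure gradient
`ρ Aᵀ A x = -ρ A² x`; the induction equation reduces to `B' = A B - B A`. -/

section LinearFields

variable (M N : Matrix (Fin 3) (Fin 3) ℝ) (x : Fin 3 → ℝ)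

theorem pd_const (c : ℝ) (j : Fin 3) : pd j (fun _ => c) x = 0 := by
  simp [pd]

theorem pd_const_mul (c : ℝ) (f : (Fin 3 → ℝ) → ℝ) (j : Fin 3) :
    pd j (fun y => c * f y) x = c * pd j f x :=
  congrFun (deriv_const_mul_field' c) (x j)

theorem hasDerivAt_mulVec_update (a j : Fin 3) (s : ℝ) :
    HasDerivAt (fun s => (M *ᵥ Function.update x j s) a) (M a j) s := by
  have h := (M.mulVecLin.toContinuousLinearMap).hasFDerivAt.comp_hasDerivAt s
    (hasDerivAt_update x j s)
  simpa using hasDerivAt_pi.mp h a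

theorem hasDerivAt_mulVec_mul_mulVec_update (a b j : Fin 3) :
    HasDerivAt (fun s => (M *ᵥ Function.update x j s) a * (N *ᵥ Function.update x j s) b)
      (M a j * (N *ᵥ x) b + (M *ᵥ x) a * N b j) (x j) := by
  simpa only [Function.update_eq_self] using (hasDerivAt_mulVec_update M x a j (x j)).fun_mul
    (hasDerivAt_mulVec_update N x b j (x j))

theorem pd_mulVec (a j : Fin 3) : pd j (fun y => (M *ᵥ y) a) x = M a j :=
  (hasDerivAt_mulVec_update M x a j (x j)).deriv

theorem pd_dotProduct_mulVec (j : Fin 3) :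
    pd j (fun y => (M *ᵥ y) ⬝ᵥ (N *ᵥ y)) x = (Mᵀ *ᵥ (N *ᵥ x)) j + (Nᵀ *ᵥ (M *ᵥ x)) j := by
  have h := HasDerivAt.fun_sum (u := Finset.univ) fun k _ =>
    hasDerivAt_mulVec_mul_mulVec_update M N x k k j
  simp only [pd, dotProduct]
  rw [h.deriv]
  simp only [Finset.sum_add_distrib, mulVec, dotProduct, transpose_apply, mul_comm _ (N _ j)]

theorem pd_cross3_mulVec (j k : Fin 3) :
    pd j (fun y => cross3 (M *ᵥ y) (N *ᵥ y) k) x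
      = (cross3 (M.col j) (N *ᵥ x) + cross3 (M *ᵥ x) (N.col j)) k := by
  have hprod := hasDerivAt_mulVec_mul_mulVec_update M N x
  refine HasDerivAt.deriv ?_
  fin_cases k <;>
  · refine ((hprod _ _ j).fun_sub (hprod _ _ j)).congr_deriv ?_
    simp only [cross3, col_apply, Pi.add_apply, Fin.isValue, Fin.zero_eta, Fin.mk_one,
      Fin.reduceFinMk, cons_val_zero, cons_val_one, cons_val]
    ring

theorem sum_mul_pd_mulVec (u : Fin 3 → ℝ) (i : Fin 3) :
    ∑ j, u j * pd j (fun y => (M *ᵥ y) i) x = (M *ᵥ u) i := by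
  simp only [pd_mulVec]
  simp only [mulVec, dotProduct, mul_comm]

theorem slap_mulVec (a : Fin 3) : slap (fun y => (M *ᵥ y) a) x = 0 := by
  simp [slap, pd_mulVec, pd_const]

theorem vdiv_mulVec : vdiv (fun y => M *ᵥ y) x = M.trace := by
  simp [vdiv, pd_mulVec, trace]

theorem vcurl_mulVec_of_transpose_eq (hM : Mᵀ = M) : vcurl (fun y => M *ᵥ y) x = 0 := by
  have hsymm : ∀ a b, M a b = M b a := fun a b => by rw [← transpose_apply M b a, hM]
  ext i
  fin_cases i <;> simp [vcurl, pd_mulVec, hsymm 1 0, hsymm 2 0, hsymm 2 1]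

theorem vcurl_cross3_mulVec :
    vcurl (fun y => cross3 (M *ᵥ y) (N *ᵥ y)) x
      = N.trace • (M *ᵥ x) - M.trace • (N *ᵥ x) + (M * N) *ᵥ x - (N * M) *ᵥ x := by
  ext i
  fin_cases i <;>
  · simp only [vcurl, pd_cross3_mulVec]
    simp only [cross3, col_apply, mulVec, dotProduct, Fin.sum_univ_three, Pi.add_apply,
      Pi.sub_apply, Pi.smul_apply, smul_eq_mul, trace, diag_apply, mul_apply, Fin.isValue,
      Fin.zero_eta, Fin.mk_one, Fin.reduceFinMk, cons_val_zero, cons_val_one, cons_val]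
    ring

end LinearFields

theorem cross3_zero (u : Fin 3 → ℝ) : cross3 u 0 = 0 := by
  ext i; fin_cases i <;> simp [cross3]

section ExpConj

open NormedSpace

theorem hasDerivAt_exp_smul_mul_mul_exp_neg_smul {𝔸 : Type*} [NormedRing 𝔸] [NormedAlgebra ℝ 𝔸]
    [CompleteSpace 𝔸] (A B : 𝔸) (t : ℝ) :
    HasDerivAt (fun s : ℝ => exp (s • A) * B * exp (-(s • A)))
      (A * (exp (t • A) * B * exp (-(t • A))) - exp (t • A) * B * exp (-(t • A)) * A) t := by
  have hneg : HasDerivAt (fun s : ℝ => exp (-(s • A))) (exp (-(t • A)) * -A) t := by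
    simpa only [smul_neg] using hasDerivAt_exp_smul_const (𝕂 := ℝ) (-A) t
  convert ((hasDerivAt_exp_smul_const' A t).mul_const B).fun_mul hneg using 1
  noncomm_ring

variable {n : Type*} [Fintype n] [DecidableEq n]

theorem hasDerivAt_exp_conj_mulVec (A B : Matrix n n ℝ) (x : n → ℝ) (i : n) (t : ℝ) :
    HasDerivAt (fun s : ℝ => ((exp (s • A) * B * exp (-(s • A))) *ᵥ x) i)
      (((A * (exp (t • A) * B * exp (-(t • A))) - exp (t • A) * B * exp (-(t • A)) * A)
        *ᵥ x) i) t := by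
  let _ : NormedRing (Matrix n n ℝ) := Matrix.linftyOpNormedRing
  let _ : NormedAlgebra ℝ (Matrix n n ℝ) := Matrix.linftyOpNormedAlgebra
  let L := LinearMap.proj i ∘ₗ (Matrix.mulVecBilin ℝ ℝ).flip x
  exact L.toContinuousLinearMap.hasFDerivAt.comp_hasDerivAt t
    (hasDerivAt_exp_smul_mul_mul_exp_neg_smul A B t)

theorem trace_exp_conj (A B : Matrix n n ℝ) (t : ℝ) :
    (exp (t • A) * B * exp (-(t • A))).trace = B.trace := by
  rw [trace_mul_comm, ← mul_assoc, ← Matrix.exp_add_of_commute _ _ (Commute.refl (t • A)).neg_left,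
    neg_add_cancel, NormedSpace.exp_zero, one_mul]

theorem transpose_exp_conj_of_skew (A B : Matrix n n ℝ) (hA : Aᵀ = -A) (hB : Bᵀ = B)
    (t : ℝ) : (exp (t • A) * B * exp (-(t • A)))ᵀ = exp (t • A) * B * exp (-(t • A)) := by
  rw [transpose_mul, transpose_mul, ← Matrix.exp_transpose, ← Matrix.exp_transpose,
    transpose_neg, transpose_smul, hA, smul_neg, neg_neg, hB, mul_assoc]

end ExpConj

/-- Proposition 2.3: `v = Ax` with `A` constant skew-symmetric,
`H(t) = e^{tA} B₀ e^{-tA} x` with `B₀` symmetric traceless. -/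
theorem stmt_2 (ρ ν μ₀ η : ℝ) (hρ : 0 < ρ)
    (A B₀ : Matrix (Fin 3) (Fin 3) ℝ)
    (hA : Aᵀ = -A) (hB : B₀ᵀ = B₀) (htr : B₀.trace = 0) :
    MHD ρ ν μ₀ η (fun _ x => A.mulVec x)
      (fun t x =>
        (NormedSpace.exp (t • A) * B₀ * NormedSpace.exp (-(t • A))).mulVec x)
      (fun _ x => (ρ / 2) * (A.mulVec x ⬝ᵥ A.mulVec x)) := by
  intro t x
  set B := NormedSpace.exp (t • A) * B₀ * NormedSpace.exp (-(t • A))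
  have hA_trace : A.trace = 0 := by
    have h : A.trace = -A.trace := by rw [← trace_neg, ← hA, trace_transpose]
    linarith
  have hB_symm : Bᵀ = B := transpose_exp_conj_of_skew A B₀ hA hB t
  have hB_trace : B.trace = 0 := (trace_exp_conj A B₀ t).trans htr
  refine ⟨(vdiv_mulVec A x).trans hA_trace, fun i => ?_,
    (vdiv_mulVec B x).trans hB_trace, fun i => ?_⟩
  · rw [deriv_const, sum_mul_pd_mulVec, vcurl_mulVec_of_transpose_eq B x hB_symm, cross3_zero,
      pd_const_mul, pd_dotProduct_mulVec, slap_mulVec, hA, neg_mulVec]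
    simp only [Pi.neg_apply, Pi.zero_apply, mul_zero]
    field_simp
    ring
  · rw [(hasDerivAt_exp_conj_mulVec A B₀ x i t).deriv, vcurl_cross3_mulVec, hA_trace, hB_trace,
      slap_mulVec]
    simp [sub_mulVec]
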